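/- For every positive integer m, the coefficient of z^m in H(z)^{2m+1} equals 1, where H(z) = C(z)/S(z) with C(z) = Σ_{k≥0} z^k/(2k)! and S(z) = Σ_{k≥0} z^k/(2k+1)!. -/

import Mathlib

/-!
Because `C(z)² - z S(z)² = 1` (this is `cosh² - sinh² = 1` at `√z`), `H² = z + S⁻²`, so
`H^(2m+1) = ∑_{k+j=m} (m choose k) z^k · H S^(-2j)` and the coefficient of `z^m` is
`∑_{k+j=m} (m choose k) [z^j] (H S^(-2j))`. From `2 z S' = C - S` one gets
`z (S^(-2j))' = j (S^(-2j) - H S^(-2j))`, and the `j`-th coefficient of `z f'` is `j [z^j] f`;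
hence `[z^j] (H S^(-2j)) = 0` for `j > 0` (the formal residue computation behind `u = tanh x`).
Only `j = 0` survives, contributing `[z^0] H = 1`.
-/

open PowerSeries Finset.HasAntidiagonal

noncomputable def Cser : PowerSeries ℚ := PowerSeries.mk fun k => 1 / (2 * k).factorial

noncomputable def Sser : PowerSeries ℚ := PowerSeries.mk fun k => 1 / (2 * k + 1).factorial

noncomputable def Hser : PowerSeries ℚ := Cser * Sser⁻¹

theorem PowerSeries.coeff_X_mul_derivative {R : Type*} [CommSemiring R] (f : R⟦X⟧) (n : ℕ) :
    coeff n (X * d⁄dX R f) = n * coeff n f := by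
  rcases n with _ | n
  · simp
  · rw [coeff_succ_X_mul, coeff_derivative, mul_comm]
    push_cast
    rfl

@[simp] lemma coeff_Cser (n : ℕ) : coeff n Cser = 1 / (2 * n).factorial := coeff_mk _ _

@[simp] lemma coeff_Sser (n : ℕ) : coeff n Sser = 1 / (2 * n + 1).factorial := coeff_mk _ _

@[simp] lemma constantCoeff_Cser : constantCoeff Cser = 1 := by
  simp [← coeff_zero_eq_constantCoeff]

@[simp] lemma constantCoeff_Sser : constantCoeff Sser = 1 := by
  simp [← coeff_zero_eq_constantCoeff]

lemma Sser_mul_inv : Sser * Sser⁻¹ = 1 :=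
  PowerSeries.mul_inv_cancel _ (by simp)

lemma two_mul_derivative_Cser : 2 * d⁄dX ℚ Cser = Sser := by
  ext n
  have hfact : ((2 * (n + 1)).factorial : ℚ) = (2 * n + 2) * (2 * n + 1).factorial := by
    rw [show 2 * (n + 1) = 2 * n + 1 + 1 by ring, Nat.factorial_succ]; push_cast; ring
  rw [← map_ofNat C 2, coeff_C_mul, coeff_derivative, coeff_Cser, coeff_Sser, hfact]
  field_simp

lemma two_mul_X_mul_derivative_Sser : 2 * (X * d⁄dX ℚ Sser) = Cser - Sser := by
  ext n
  rw [← map_ofNat C 2, coeff_C_mul, coeff_X_mul_derivative, map_sub, coeff_Cser, coeff_Sser,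
    Nat.factorial_succ]
  have : ((2 * n).factorial : ℚ) ≠ 0 := by positivity
  field_simp
  push_cast
  ring

lemma Cser_sq : Cser ^ 2 = 1 + X * Sser ^ 2 := by
  apply derivative.ext
  · simp only [map_add, Derivation.leibniz, derivative_pow, derivative_one, derivative_X,
      smul_eq_mul]
    linear_combination Cser * two_mul_derivative_Cser - Sser * two_mul_X_mul_derivative_Sser
  · simp

lemma Hser_sq : Hser ^ 2 = X + Sser⁻¹ ^ 2 := by
  rw [Hser, mul_pow, Cser_sq]
  linear_combination (X * (Sser * Sser⁻¹ + 1)) * Sser_mul_inv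

@[simp] lemma constantCoeff_Hser : constantCoeff Hser = 1 := by
  simp [Hser]

lemma X_mul_derivative_Sser_inv_pow (j : ℕ) :
    X * d⁄dX ℚ (Sser⁻¹ ^ (2 * j)) =
      (j : ℚ⟦X⟧) * (Sser⁻¹ ^ (2 * j) - Hser * Sser⁻¹ ^ (2 * j)) := by
  rcases j with _ | j
  · simp
  rw [derivative_pow, derivative_inv', show 2 * (j + 1) - 1 = 2 * j + 1 by omega, Hser]
  push_cast
  linear_combination (-(j + 1) * Sser⁻¹ ^ (2 * j + 3)) * two_mul_X_mul_derivative_Sser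
    + ((j + 1) * Sser⁻¹ ^ (2 * j + 2)) * Sser_mul_inv

lemma coeff_Hser_mul_Sser_inv_pow {j : ℕ} (hj : j ≠ 0) :
    coeff j (Hser * Sser⁻¹ ^ (2 * j)) = 0 := by
  have h := congrArg (coeff j) (X_mul_derivative_Sser_inv_pow j)
  rw [coeff_X_mul_derivative, ← map_natCast C j, coeff_C_mul, map_sub] at h
  simpa [hj] using h.symm

lemma coeff_Hser_pow_two_mul_add_one (m : ℕ) :
    coeff m (Hser ^ (2 * m + 1)) =
      ∑ p ∈ antidiagonal m, m.choose p.1 * coeff p.2 (Hser * Sser⁻¹ ^ (2 * p.2)) := by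
  rw [pow_succ, pow_mul, Hser_sq, (Commute.all _ _).add_pow', Finset.sum_mul, map_sum]
  refine Finset.sum_congr rfl fun p hp => ?_
  rw [mem_antidiagonal] at hp
  rw [nsmul_eq_mul, ← hp, ← pow_mul, mul_assoc, mul_assoc, ← map_natCast C, coeff_C_mul,
    coeff_X_pow_mul', if_pos le_self_add, Nat.add_sub_cancel_left, mul_comm (Sser⁻¹ ^ _)]

theorem signature_projective_space_general (m : ℕ) :
    coeff m (Hser ^ (2 * m + 1)) = 1 := by
  rw [coeff_Hser_pow_two_mul_add_one, Finset.sum_eq_single (m, 0)]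
  · simp
  · rintro ⟨k, j⟩ hkj hne
    have hj : j ≠ 0 := by
      rintro rfl
      exact hne (by simpa using hkj)
    rw [coeff_Hser_mul_Sser_inv_pow hj, mul_zero]
  · simp

theorem signature_projective_space (m : ℕ) (hm : 0 < m) :
    coeff m (Hser ^ (2 * m + 1)) = 1 :=
  signature_projective_space_general m
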